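/- arXiv:2102.12966 — 2 statements merged into one kernel-verified Lean document; each statement's English description precedes it below -/
import Mathlib

section
/- The point (0, 12) on the elliptic curve y^2 = x^3 - 52x + 144 over the rationals has infinite order in the group of rational points. -/
/-!
If a point `Q = (x, y)` on `y² = x³ + a₂x² + a₄x + a₆` with 2-integral coefficients has
`|x|₂ > 1`, then `x³` dominates the right-hand side, so `|y|₂² = |x|₂³`, and the duplication
formula `x(2Q) = ((3x² + 2a₂x + a₄) / 2y)² - a₂ - 2x` gives `|x(2Q)|₂ = 4 |x|₂`. Hence the points
`2ᵏ • Q` have pairwise distinct x-coordinates and `Q` has infinite order. For `P = (0, 12)` the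
point `2P` has x-coordinate `169/36`, of 2-adic norm `4`.
-/

/-- The Weierstrass curve `y² = x³ - 52x + 144` over `ℚ`. -/
def E0 : WeierstrassCurve ℚ := ⟨0, 0, 0, -52, 144⟩

open WeierstrassCurve.Affine WeierstrassCurve.Affine.Point

section padicNorm

variable {p : ℕ} [Fact p.Prime]

theorem padicNorm_add_eq_left_of_lt {q r : ℚ} (h : padicNorm p r < padicNorm p q) :
    padicNorm p (q + r) = padicNorm p q := by
  rw [padicNorm.add_eq_max_of_ne h.ne', max_eq_left h.le]

theorem padicNorm_add_lt {q r t : ℚ} (hq : padicNorm p q < t) (hr : padicNorm p r < t) :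
    padicNorm p (q + r) < t :=
  padicNorm.nonarchimedean.trans_lt (max_lt hq hr)

theorem padicNorm_mul_lt_of_le_one {a q t : ℚ} (ha : padicNorm p a ≤ 1)
    (hq : padicNorm p q < t) : padicNorm p (a * q) < t := by
  rw [padicNorm.mul]
  exact (mul_le_of_le_one_left (padicNorm.nonneg q) ha).trans_lt hq

theorem padicNorm_pow (q : ℚ) (n : ℕ) : padicNorm p (q ^ n) = padicNorm p q ^ n :=
  IsAbsoluteValue.abv_pow (padicNorm p) q n

end padicNorm

theorem padicNorm_two_two : padicNorm 2 (2 : ℚ) = 2⁻¹ := by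
  exact_mod_cast padicNorm.padicNorm_p_of_prime (p := 2)

theorem padicNorm_two_of_odd {n : ℕ} (hn : Odd n) : padicNorm 2 (n : ℚ) = 1 :=
  (padicNorm.nat_eq_one_iff n).2 (Nat.two_dvd_ne_zero.2 (Nat.odd_iff.1 hn))

namespace WeierstrassCurve

structure IsTwoIntegralCubic (W : WeierstrassCurve ℚ) : Prop where
  a₁_eq_zero : W.a₁ = 0
  a₃_eq_zero : W.a₃ = 0
  padicNorm_a₂_le : padicNorm 2 W.a₂ ≤ 1
  padicNorm_a₄_le : padicNorm 2 W.a₄ ≤ 1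
  padicNorm_a₆_le : padicNorm 2 W.a₆ ≤ 1

namespace Affine

variable {W : Affine ℚ}

theorem padicNorm_sq_eq_padicNorm_cube (hW : W.IsTwoIntegralCubic) {x y : ℚ}
    (h : W.Equation x y) (hx : 1 < padicNorm 2 x) :
    padicNorm 2 y ^ 2 = padicNorm 2 x ^ 3 := by
  have hy : y ^ 2 = x ^ 3 + (W.a₂ * x ^ 2 + W.a₄ * x + W.a₆) := by
    rw [equation_iff, hW.a₁_eq_zero, hW.a₃_eq_zero] at h
    linear_combination h
  have hx12 : padicNorm 2 x < padicNorm 2 x ^ 2 := by nlinarith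
  have hx23 : padicNorm 2 x ^ 2 < padicNorm 2 x ^ 3 := by nlinarith
  have hlow : padicNorm 2 (W.a₂ * x ^ 2 + W.a₄ * x + W.a₆) < padicNorm 2 (x ^ 3) := by
    rw [padicNorm_pow]
    refine padicNorm_add_lt (padicNorm_add_lt ?_ ?_) (by linarith [hW.padicNorm_a₆_le])
    · exact padicNorm_mul_lt_of_le_one hW.padicNorm_a₂_le (by rwa [padicNorm_pow])
    · exact padicNorm_mul_lt_of_le_one hW.padicNorm_a₄_le (by linarith)
  rw [← padicNorm_pow, ← padicNorm_pow, hy, padicNorm_add_eq_left_of_lt hlow]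

theorem exists_add_self_eq_some_of_one_lt_padicNorm (hW : W.IsTwoIntegralCubic) {x y : ℚ}
    (h : W.Nonsingular x y) (hx : 1 < padicNorm 2 x) :
    ∃ (x' y' : ℚ) (h' : W.Nonsingular x' y'),
      some _ _ h + some _ _ h = some _ _ h' ∧ padicNorm 2 x' = 4 * padicNorm 2 x := by
  have hx0 : 0 < padicNorm 2 x := one_pos.trans hx
  have hy2 := padicNorm_sq_eq_padicNorm_cube hW h.1 hx
  have hy0 : y ≠ 0 := by
    rintro rfl
    rw [padicNorm.zero] at hy2
    nlinarith [pow_pos hx0 3]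
  have hnegY : W.negY x y = -y := by simp [negY, hW.a₁_eq_zero, hW.a₃_eq_zero]
  have hyne : y ≠ W.negY x y := by
    rw [hnegY]
    exact fun h => hy0 (by linarith)
  refine ⟨_, _, _, add_self_of_Y_ne hyne, ?_⟩
  have h3 : padicNorm 2 (3 : ℚ) = 1 := mod_cast padicNorm_two_of_odd (n := 3) (by decide)
  have hnum : padicNorm 2 (3 * x ^ 2 + (2 * W.a₂ * x + W.a₄)) = padicNorm 2 x ^ 2 := by
    have hlow : padicNorm 2 (2 * W.a₂ * x + W.a₄) < padicNorm 2 (3 * x ^ 2) := by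
      rw [padicNorm.mul, padicNorm_pow, h3, one_mul]
      refine padicNorm_add_lt ?_ ?_
      · rw [padicNorm.mul, padicNorm.mul, padicNorm_two_two]
        nlinarith [hW.padicNorm_a₂_le, padicNorm.nonneg (p := 2) W.a₂]
      · nlinarith [hW.padicNorm_a₄_le]
    rw [padicNorm_add_eq_left_of_lt hlow, padicNorm.mul, padicNorm_pow, h3, one_mul]
  have hslope : padicNorm 2 (W.slope x x y y) ^ 2 = 4 * padicNorm 2 x := by
    rw [slope_of_Y_ne rfl hyne, hnegY, hW.a₁_eq_zero,
      show 3 * x ^ 2 + 2 * W.a₂ * x + W.a₄ - 0 * y = 3 * x ^ 2 + (2 * W.a₂ * x + W.a₄) by ring,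
      show y - -y = 2 * y by ring, padicNorm.div, hnum, padicNorm.mul, padicNorm_two_two,
      div_pow, mul_pow, hy2]
    field_simp
    ring
  have hlow : padicNorm 2 (-(W.a₂ + 2 * x)) < padicNorm 2 (W.slope x x y y ^ 2) := by
    rw [padicNorm.neg, padicNorm_pow, hslope]
    refine padicNorm_add_lt (by linarith [hW.padicNorm_a₂_le]) ?_
    rw [padicNorm.mul, padicNorm_two_two]
    linarith
  rw [addX, hW.a₁_eq_zero, show ∀ ℓ : ℚ, ℓ ^ 2 + 0 * ℓ - W.a₂ - x - x = ℓ ^ 2 + -(W.a₂ + 2 * x)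
    by intro; ring, padicNorm_add_eq_left_of_lt hlow, padicNorm_pow, hslope]

theorem exists_two_pow_nsmul_eq_some_of_one_lt_padicNorm (hW : W.IsTwoIntegralCubic) {x y : ℚ}
    (h : W.Nonsingular x y) (hx : 1 < padicNorm 2 x) (k : ℕ) :
    ∃ (x' y' : ℚ) (h' : W.Nonsingular x' y'),
      (2 ^ k) • some _ _ h = some _ _ h' ∧ padicNorm 2 x' = 4 ^ k * padicNorm 2 x := by
  induction k with
  | zero => exact ⟨x, y, h, one_nsmul _, by ring⟩
  | succ k ih =>
    obtain ⟨x', y', h', hk, hx'⟩ := ih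
    have hx'1 : 1 < padicNorm 2 x' :=
      hx' ▸ hx.trans_le (le_mul_of_one_le_left (padicNorm.nonneg x) (one_le_pow₀ (by norm_num)))
    obtain ⟨x'', y'', h'', hdbl, hx''⟩ := exists_add_self_eq_some_of_one_lt_padicNorm hW h' hx'1
    refine ⟨x'', y'', h'', by rw [pow_succ, mul_nsmul, two_nsmul, hk, hdbl], ?_⟩
    rw [hx'', hx', pow_succ]
    ring

theorem not_isOfFinAddOrder_some_of_one_lt_padicNorm (hW : W.IsTwoIntegralCubic) {x y : ℚ}
    (h : W.Nonsingular x y) (hx : 1 < padicNorm 2 x) : ¬IsOfFinAddOrder (some _ _ h) := by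
  choose x' y' h' hsmul hnorm using exists_two_pow_nsmul_eq_some_of_one_lt_padicNorm hW h hx
  have hinj : Function.Injective fun k : ℕ => (2 ^ k) • some _ _ h := by
    intro k l hkl
    simp only [hsmul] at hkl
    injection hkl with hxkl
    have h4 : (4 : ℚ) ^ k * padicNorm 2 x = 4 ^ l * padicNorm 2 x := by
      rw [← hnorm, ← hnorm, hxkl]
    exact pow_right_injective₀ (by norm_num) (by norm_num)
      (mul_right_cancel₀ (one_pos.trans hx).ne' h4)
  rw [← infinite_multiples]
  exact Set.infinite_of_injective_forall_mem hinj fun k => ⟨2 ^ k, rfl⟩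

end Affine

end WeierstrassCurve

theorem isTwoIntegralCubic_E0 : E0.IsTwoIntegralCubic :=
  ⟨rfl, rfl, by simp [E0], by exact_mod_cast padicNorm.of_int (-52),
    by exact_mod_cast padicNorm.of_int 144⟩

/-- The point `(0, 12)` on the elliptic curve `y² = x³ - 52x + 144` over `ℚ` has
infinite order in the group of rational points. -/
theorem stmt_0 (h : E0.toAffine.Nonsingular 0 12) :
    ¬ IsOfFinAddOrder (WeierstrassCurve.Affine.Point.some _ _ h) := by
  have hy : (12 : ℚ) ≠ E0.toAffine.negY 0 12 := by norm_num [negY, E0]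
  have hx : E0.toAffine.addX 0 0 (E0.toAffine.slope 0 0 12 12) = 169 / (2 ^ 2 * 9) := by
    rw [addX, slope_of_Y_ne rfl hy]
    norm_num [negY, E0]
  have hx1 : 1 < padicNorm 2 (E0.toAffine.addX 0 0 (E0.toAffine.slope 0 0 12 12)) := by
    have h169 : padicNorm 2 (169 : ℚ) = 1 := mod_cast padicNorm_two_of_odd (n := 169) (by decide)
    have h9 : padicNorm 2 (9 : ℚ) = 1 := mod_cast padicNorm_two_of_odd (n := 9) (by decide)
    rw [hx, padicNorm.div, padicNorm.mul, padicNorm_pow, padicNorm_two_two, h169, h9]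
    norm_num
  intro hfin
  exact not_isOfFinAddOrder_some_of_one_lt_padicNorm isTwoIntegralCubic_E0
    (nonsingular_add h h fun hxy => hy hxy.right) hx1 (add_self_of_Y_ne hy ▸ hfin.add hfin)
end

section
/- The affine curve over ℚ in 𝔸² defined by (the projectivization of) S₁²S₂T₂ + S₁T₁(2S₂² + 2S₂T₂ + 3T₂²) + T₁²T₂(S₂ + T₂) = 0 in ℙ¹ × ℙ¹ is a smooth curve of bidegree (2,2); in particular the hypersurface X₁ ⊂ ℙ¹ × ℙ¹ defined by this bihomogeneous polynomial is smooth. -/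
/-!
At a singular point the boundary cases `t₁ = 0` or `t₂ = 0` are excluded directly. Otherwise
`s₁ ∂F/∂S₁ - t₁ ∂F/∂T₁` and `∂F/∂T₂` combine to a third equation that is, like `∂F/∂S₁` and
`∂F/∂T₁`, linear in `(s₁, t₁)`. Since `(s₁, t₁) ≠ 0`, two `2 × 2` determinants vanish; they are
binary cubics in `(s₂, t₂)`, and `1305 t₂⁵` lies in the ideal they generate, forcing `t₂ = 0`.
-/

theorem det_eq_zero_of_ne_zero_solution {R : Type*} [CommRing R] [IsDomain R] {a b c d x y : R}
    (hxy : (x, y) ≠ (0, 0)) (h₁ : a * x + b * y = 0) (h₂ : c * x + d * y = 0) :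
    a * d - b * c = 0 := by
  by_contra hdet
  have hx : (a * d - b * c) * x = 0 := by linear_combination d * h₁ - b * h₂
  have hy : (a * d - b * c) * y = 0 := by linear_combination a * h₂ - c * h₁
  exact hxy <| Prod.ext
    ((mul_eq_zero.mp hx).resolve_left hdet) ((mul_eq_zero.mp hy).resolve_left hdet)

theorem eq_zero_of_cubics_eq_zero {K : Type*} [Field K] [CharZero K] {s t : K}
    (hP : 2 * s ^ 3 + 6 * s ^ 2 * t + 6 * s * t ^ 2 + 9 * t ^ 3 = 0)
    (hG : 4 * s ^ 3 + 6 * s ^ 2 * t - 4 * s * t ^ 2 - 3 * t ^ 3 = 0) :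
    t = 0 := by
  have h : (1305 : K) * t ^ 5 = 0 := by
    linear_combination (-20 * s ^ 2 - 78 * s * t + 146 * t ^ 2) * hP
      + (10 * s ^ 2 + 54 * s * t + 3 * t ^ 2) * hG
  simpa using h

theorem stmt_14_general (K : Type*) [Field K] [CharZero K]
    (s₁ t₁ s₂ t₂ : K)
    (h1 : (s₁, t₁) ≠ (0, 0)) (h2 : (s₂, t₂) ≠ (0, 0))
    (hS₁ : 2 * s₁ * s₂ * t₂ + t₁ * (2 * s₂ ^ 2 + 2 * s₂ * t₂ + 3 * t₂ ^ 2) = 0)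
    (hT₁ : s₁ * (2 * s₂ ^ 2 + 2 * s₂ * t₂ + 3 * t₂ ^ 2) + 2 * t₁ * t₂ * (s₂ + t₂) = 0)
    (hS₂ : s₁ ^ 2 * t₂ + s₁ * t₁ * (4 * s₂ + 2 * t₂) + t₁ ^ 2 * t₂ = 0)
    (hT₂ : s₁ ^ 2 * s₂ + s₁ * t₁ * (2 * s₂ + 6 * t₂) + t₁ ^ 2 * (s₂ + 2 * t₂) = 0) :
    False := by
  have ht₁ : t₁ ≠ 0 := by
    rintro rfl
    have hs₁ : s₁ ^ 2 ≠ 0 := pow_ne_zero 2 fun hs => h1 (by rw [hs])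
    refine h2 (Prod.ext ?_ ?_)
    · exact (mul_eq_zero.mp (by linear_combination hT₂ : s₁ ^ 2 * s₂ = 0)).resolve_left hs₁
    · exact (mul_eq_zero.mp (by linear_combination hS₂ : s₁ ^ 2 * t₂ = 0)).resolve_left hs₁
  have ht₂ : t₂ ≠ 0 := by
    rintro rfl
    have hs₂ : 2 * t₁ * s₂ ^ 2 = 0 := by linear_combination hS₁
    exact h2 (by simpa [ht₁] using hs₂)
  have hA : s₁ ^ 2 * s₂ = t₁ ^ 2 * (s₂ + t₂) :=
    mul_left_cancel₀ (mul_ne_zero two_ne_zero ht₂) (by linear_combination s₁ * hS₁ - t₁ * hT₁)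
  have hlin : (2 * s₂ + 6 * t₂) * s₁ + (2 * s₂ + 3 * t₂) * t₁ = 0 :=
    mul_left_cancel₀ ht₁ (by linear_combination hT₂ - hA)
  have hP := det_eq_zero_of_ne_zero_solution h1
    (show 2 * s₂ * t₂ * s₁ + (2 * s₂ ^ 2 + 2 * s₂ * t₂ + 3 * t₂ ^ 2) * t₁ = 0 by
      linear_combination hS₁) hlin
  have hG := det_eq_zero_of_ne_zero_solution h1
    (show (2 * s₂ ^ 2 + 2 * s₂ * t₂ + 3 * t₂ ^ 2) * s₁ + 2 * t₂ * (s₂ + t₂) * t₁ = 0 by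
      linear_combination hT₁) hlin
  exact ht₂ <| eq_zero_of_cubics_eq_zero (s := s₂)
    (by linear_combination -hP / 2) (by linear_combination hG)

/-- The hypersurface `X₁ ⊂ ℙ¹ × ℙ¹` defined by the bihomogeneous polynomial of
bidegree `(2,2)`
`F = S₁²S₂T₂ + S₁T₁(2S₂² + 2S₂T₂ + 3T₂²) + T₁²T₂(S₂ + T₂)`
is smooth: over an algebraic closure there is no common zero of `F` and its four
partial derivatives with `(S₁,T₁) ≠ (0,0)` and `(S₂,T₂) ≠ (0,0)`. -/
theorem stmt_14 (K : Type*) [Field K] [IsAlgClosed K] [CharZero K]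
    (s₁ t₁ s₂ t₂ : K)
    (h1 : (s₁, t₁) ≠ (0, 0)) (h2 : (s₂, t₂) ≠ (0, 0))
    (hF : s₁ ^ 2 * s₂ * t₂ + s₁ * t₁ * (2 * s₂ ^ 2 + 2 * s₂ * t₂ + 3 * t₂ ^ 2)
        + t₁ ^ 2 * t₂ * (s₂ + t₂) = 0)
    (hS₁ : 2 * s₁ * s₂ * t₂ + t₁ * (2 * s₂ ^ 2 + 2 * s₂ * t₂ + 3 * t₂ ^ 2) = 0)
    (hT₁ : s₁ * (2 * s₂ ^ 2 + 2 * s₂ * t₂ + 3 * t₂ ^ 2) + 2 * t₁ * t₂ * (s₂ + t₂) = 0)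
    (hS₂ : s₁ ^ 2 * t₂ + s₁ * t₁ * (4 * s₂ + 2 * t₂) + t₁ ^ 2 * t₂ = 0)
    (hT₂ : s₁ ^ 2 * s₂ + s₁ * t₁ * (2 * s₂ + 6 * t₂) + t₁ ^ 2 * (s₂ + 2 * t₂) = 0) :
    False :=
  stmt_14_general K s₁ t₁ s₂ t₂ h1 h2 hS₁ hT₁ hS₂ hT₂
end
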